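/- arXiv:0902.2287 — 5 statements merged into one kernel-verified Lean document; each statement's English description precedes it below -/
import Mathlib

section
/- Let A be a bounded positive definite self-adjoint operator and B a bounded positive semidefinite self-adjoint operator on a Hilbert space H, and suppose the operator B^{1/2}A^{-1/2} has closed range with ‖(B^{1/2}A^{-1/2})†‖ = k < ∞. Let H_κ = A + κ²B and let H_∞† = s-lim_{κ→∞} H_κ⁻¹. Then for every f in the closure of N(B) one has the upper bound (f, H_κ⁻¹f) − (f, H_∞†f) ≤ k²((f, A⁻¹f) − (f, H_∞†f))/κ². -/
local notation "⟪" x ", " y "⟫" => @inner ℝ _ _ x y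

/-!
Write `r = H_κ⁻¹f − H_∞†f` and `x = A⁻¹f − H_∞†f`, where `A⁻¹ = H_0⁻¹`. From
`H_κ⁻¹B = κ⁻²(1 − H_κ⁻¹A)` one gets `H_∞†B = 0`, hence `BH_∞† = 0` by symmetry, and `H_κ⁻¹`,
`H_∞†` both invert `A` on `N(B)`. So `r` and `x` are `A`-orthogonal to `N(B)`, which gives
`(f, H_κ⁻¹f) − (f, H_∞†f) = (Ax, r) = ‖A^{1/2}r‖² + κ²‖B^{1/2}r‖²` and
`(f, A⁻¹f) − (f, H_∞†f) = ‖A^{1/2}x‖²`. Being `A`-orthogonal to `N(B)` also puts `A^{1/2}r` in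
`N(C)ᗮ`, the range of the projection `C†C`, so `‖A^{1/2}r‖ ≤ k‖B^{1/2}r‖`. Hence
`κ²‖A^{1/2}r‖² ≤ k²(Ax, r) ≤ k²‖A^{1/2}x‖‖A^{1/2}r‖`, and the bound follows.
-/

open Filter Topology ContinuousLinearMap

section StrongResolventLimit

variable {E : Type*} [NormedAddCommGroup E] [NormedSpace ℝ E]
  {A B G : E →L[ℝ] E} {R : ℝ → E →L[ℝ] E}

theorem resolvent_apply_map_of_map_eq_zero (hR : ∀ κ : ℝ, R κ ∘L (A + κ ^ 2 • B) = 1)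
    (κ : ℝ) {v : E} (hv : B v = 0) : R κ (A v) = v := by
  simpa [hv] using congrArg (· v) (hR κ)

theorem strongLimit_apply_map_of_map_eq_zero (hR : ∀ κ : ℝ, R κ ∘L (A + κ ^ 2 • B) = 1)
    (hG : ∀ f, Tendsto (fun κ => R κ f) atTop (𝓝 (G f))) {v : E} (hv : B v = 0) :
    G (A v) = v :=
  tendsto_nhds_unique (hG (A v))
    (tendsto_const_nhds.congr fun κ => (resolvent_apply_map_of_map_eq_zero hR κ hv).symm)

theorem strongLimit_apply_map_eq_zero (hR : ∀ κ : ℝ, R κ ∘L (A + κ ^ 2 • B) = 1)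
    (hG : ∀ f, Tendsto (fun κ => R κ f) atTop (𝓝 (G f))) (v : E) : G (B v) = 0 := by
  have hRB : ∀ κ : ℝ, κ ≠ 0 → R κ (B v) = (κ ^ 2)⁻¹ • (v - R κ (A v)) := by
    intro κ hκ
    have h := congrArg (· v) (hR κ)
    simp only [comp_apply, add_apply, smul_apply, map_add, map_smul, one_apply_eq_self] at h
    rw [eq_inv_smul_iff₀ (pow_ne_zero 2 hκ), eq_sub_iff_add_eq']
    exact h
  have hlim : Tendsto (fun κ : ℝ => (κ ^ 2)⁻¹ • (v - R κ (A v))) atTop (𝓝 0) := by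
    simpa using (tendsto_pow_atTop two_ne_zero).inv_tendsto_atTop.smul
      (tendsto_const_nhds.sub (hG (A v)))
  refine tendsto_nhds_unique (hG (B v)) (hlim.congr' ?_)
  filter_upwards [eventually_ne_atTop 0] with κ hκ using (hRB κ hκ).symm

end StrongResolventLimit

section Symmetric

variable {F : Type*} [NormedAddCommGroup F] [InnerProductSpace ℝ F]

theorem isSymmetric_of_comp_eq_one {T S : F →L[ℝ] F} (hT : (T : F →ₗ[ℝ] F).IsSymmetric)
    (hTS : T ∘L S = 1) : (S : F →ₗ[ℝ] F).IsSymmetric := by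
  have hS : ∀ u, T (S u) = u := fun u => by simpa using congrArg (· u) hTS
  intro u v
  calc ⟪S u, v⟫ = ⟪S u, T (S v)⟫ := by rw [hS]
    _ = ⟪T (S u), S v⟫ := (hT (S u) (S v)).symm
    _ = ⟪u, S v⟫ := by rw [hS]

theorem isSymmetric_of_tendsto {ι : Type*} {l : Filter ι} [l.NeBot] {T : ι → F →L[ℝ] F}
    {G : F →L[ℝ] F} (hT : ∀ i, (T i : F →ₗ[ℝ] F).IsSymmetric)
    (hG : ∀ f, Tendsto (fun i => T i f) l (𝓝 (G f))) : (G : F →ₗ[ℝ] F).IsSymmetric :=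
  fun u v => tendsto_nhds_unique ((hG u).inner tendsto_const_nhds)
    ((tendsto_const_nhds.inner (hG v)).congr fun i => (hT i u v).symm)

theorem map_apply_eq_zero_of_isSymmetric {B G : F →L[ℝ] F} (hB : (B : F →ₗ[ℝ] F).IsSymmetric)
    (hG : (G : F →ₗ[ℝ] F).IsSymmetric) (hGB : ∀ v, G (B v) = 0) (u : F) : B (G u) = 0 := by
  refine (inner_self_eq_zero (𝕜 := ℝ)).mp ?_
  calc ⟪B (G u), B (G u)⟫ = ⟪G u, B (B (G u))⟫ := hB _ _
    _ = ⟪u, G (B (B (G u)))⟫ := hG _ _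
    _ = 0 := by rw [hGB, inner_zero_right]

end Symmetric

section ResolventEnergy

variable {F : Type*} [NormedAddCommGroup F] [InnerProductSpace ℝ F]
  {A B G : F →L[ℝ] F} {R : ℝ → F →L[ℝ] F}

theorem inner_map_resolvent_sub_strongLimit_eq_zero (hR : ∀ κ : ℝ, R κ ∘L (A + κ ^ 2 • B) = 1)
    (hRs : ∀ κ : ℝ, (R κ : F →ₗ[ℝ] F).IsSymmetric)
    (hG : ∀ f, Tendsto (fun κ => R κ f) atTop (𝓝 (G f))) (κ : ℝ) (f : F) {v : F}
    (hv : B v = 0) : ⟪A v, R κ f - G f⟫ = 0 := by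
  have hRf : ⟪A v, R κ f⟫ = ⟪v, f⟫ :=
    (hRs κ _ _).symm.trans (congrArg (⟪·, f⟫) (resolvent_apply_map_of_map_eq_zero hR κ hv))
  have hGf : ⟪A v, G f⟫ = ⟪v, f⟫ := (isSymmetric_of_tendsto hRs hG _ _).symm.trans
    (congrArg (⟪·, f⟫) (strongLimit_apply_map_of_map_eq_zero hR hG hv))
  rw [inner_sub_right, hRf, hGf, sub_self]

theorem inner_resolvent_sub_inner_strongLimit (κ : ℝ) (hRl : (A + κ ^ 2 • B) ∘L R κ = 1)
    (hR : ∀ κ : ℝ, R κ ∘L (A + κ ^ 2 • B) = 1) (hRs : ∀ κ : ℝ, (R κ : F →ₗ[ℝ] F).IsSymmetric)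
    (hG : ∀ f, Tendsto (fun κ => R κ f) atTop (𝓝 (G f))) {f : F} (hBG : B (G f) = 0) :
    ⟪f, R κ f⟫ - ⟪f, G f⟫ =
      ⟪A (R κ f - G f), R κ f - G f⟫ + κ ^ 2 * ⟪B (R κ f - G f), R κ f - G f⟫ := by
  have hf : A (R κ f) + κ ^ 2 • B (R κ f) = f := by simpa using DFunLike.congr_fun hRl f
  have horth := inner_map_resolvent_sub_strongLimit_eq_zero hR hRs hG κ f hBG
  set r := R κ f - G f
  have hRf : R κ f = r + G f := (sub_add_cancel _ _).symm
  calc ⟪f, R κ f⟫ - ⟪f, G f⟫ = ⟪A (R κ f) + κ ^ 2 • B (R κ f), r⟫ := by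
        rw [hf, inner_sub_right]
    _ = ⟪A r, r⟫ + ⟪A (G f), r⟫ + κ ^ 2 * ⟪B r, r⟫ := by
        rw [hRf, map_add, map_add, hBG, add_zero, inner_add_left, inner_add_left,
          real_inner_smul_left]
    _ = ⟪A r, r⟫ + κ ^ 2 * ⟪B r, r⟫ := by rw [horth, add_zero]

end ResolventEnergy

section PseudoInverse

variable {F K : Type*} [NormedAddCommGroup F] [InnerProductSpace ℝ F] [NormedAddCommGroup K]
  [InnerProductSpace ℝ K] {C : F →L[ℝ] K} {C' : K →L[ℝ] F}

theorem pinv_apply_apply_of_forall_inner_eq_zero (h₁ : C ∘L C' ∘L C = C)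
    (h₄ : (C' ∘L C : F →ₗ[ℝ] F).IsSymmetric) {x : F} (hx : ∀ w, C w = 0 → ⟪x, w⟫ = 0) :
    C' (C x) = x := by
  set w := x - C' (C x) with hw
  have hCw : C w = 0 := by
    rw [hw, map_sub, sub_eq_zero]
    exact (DFunLike.congr_fun h₁ x).symm
  have hww : ⟪w, w⟫ = 0 := by
    have hxw : ⟪C' (C x), w⟫ = 0 := (h₄ x w).trans (by simp [hCw])
    rw [inner_sub_left, hx w hCw, hxw, sub_zero]
  exact (sub_eq_zero.mp ((inner_self_eq_zero (𝕜 := ℝ)).mp hww)).symm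

theorem norm_le_opNorm_pinv_mul_norm (h₁ : C ∘L C' ∘L C = C)
    (h₄ : (C' ∘L C : F →ₗ[ℝ] F).IsSymmetric) {x : F} (hx : ∀ w, C w = 0 → ⟪x, w⟫ = 0) :
    ‖x‖ ≤ ‖C'‖ * ‖C x‖ :=
  calc ‖x‖ = ‖C' (C x)‖ := by rw [pinv_apply_apply_of_forall_inner_eq_zero h₁ h₄ hx]
    _ ≤ ‖C'‖ * ‖C x‖ := C'.le_opNorm (C x)

end PseudoInverse

theorem real_inner_le_of_sq_mul_norm_sq_le {F : Type*} [NormedAddCommGroup F]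
    [InnerProductSpace ℝ F] {u v : F} {k κ : ℝ} (hκ : 0 < κ)
    (h : κ ^ 2 * ‖v‖ ^ 2 ≤ k ^ 2 * ⟪u, v⟫) : ⟪u, v⟫ ≤ k ^ 2 * ‖u‖ ^ 2 / κ ^ 2 := by
  rw [le_div_iff₀ (by positivity)]
  rcases le_or_gt ⟪u, v⟫ 0 with ha | ha
  · nlinarith [sq_nonneg k, sq_nonneg ‖u‖, sq_nonneg κ]
  · have hcs := real_inner_le_norm u v
    have hsq : ⟪u, v⟫ * ⟪u, v⟫ ≤ ‖u‖ ^ 2 * ‖v‖ ^ 2 := by nlinarith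
    refine le_of_mul_le_mul_right ?_ ha
    calc ⟪u, v⟫ * κ ^ 2 * ⟪u, v⟫ ≤ ‖u‖ ^ 2 * (κ ^ 2 * ‖v‖ ^ 2) := by nlinarith
      _ ≤ ‖u‖ ^ 2 * (k ^ 2 * ⟪u, v⟫) := by gcongr
      _ = k ^ 2 * ‖u‖ ^ 2 * ⟪u, v⟫ := by ring

theorem norm_sqrt_apply_le_opNorm_pinv_mul {F : Type*} [NormedAddCommGroup F]
    [InnerProductSpace ℝ F] {A B S Ah Ainvh C' : F →L[ℝ] F}
    (hAh : (Ah : F →ₗ[ℝ] F).IsSymmetric) (hAhsq : Ah ∘L Ah = A) (hSsq : S ∘L S = B)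
    (hAinvh_l : Ah ∘L Ainvh = 1) (hAinvh_r : Ainvh ∘L Ah = 1)
    (h₁ : (S ∘L Ainvh) ∘L C' ∘L (S ∘L Ainvh) = S ∘L Ainvh)
    (h₄ : (C' ∘L (S ∘L Ainvh) : F →ₗ[ℝ] F).IsSymmetric) {r : F}
    (hr : ∀ v, B v = 0 → ⟪A v, r⟫ = 0) : ‖Ah r‖ ≤ ‖C'‖ * ‖S r‖ := by
  have hAinvhAh : Ainvh (Ah r) = r := by simpa using DFunLike.congr_fun hAinvh_r r
  have h := norm_le_opNorm_pinv_mul_norm h₁ h₄ (x := Ah r) fun w hw => ?_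
  · rwa [comp_apply, hAinvhAh] at h
  have hAhAinvh : Ah (Ainvh w) = w := by simpa using DFunLike.congr_fun hAinvh_l w
  have hBw : B (Ainvh w) = 0 := by rw [← hSsq, comp_apply, ← comp_apply S Ainvh, hw, map_zero]
  calc ⟪Ah r, w⟫ = ⟪Ah (Ah (Ainvh w)), r⟫ := by
        rw [hAhAinvh, real_inner_comm]; exact (hAh _ _).symm
    _ = 0 := by rw [← comp_apply Ah Ah, hAhsq, hr _ hBw]

theorem regular_large_coupling_upper_estimate_general
    {H : Type*} [NormedAddCommGroup H] [InnerProductSpace ℝ H] [CompleteSpace H]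
    (A B S Ah Ainvh Ainv : H →L[ℝ] H)
    (hA : IsSelfAdjoint A) (hB : IsSelfAdjoint B)
    -- `S = B^{1/2}` and `Ah = A^{1/2}`, `Ainvh = A^{-1/2}`, `Ainv = A⁻¹`
    (hS : IsSelfAdjoint S) (hSsq : S ∘L S = B)
    (hAh : IsSelfAdjoint Ah) (hAhsq : Ah ∘L Ah = A)
    (hAinvh_l : Ah ∘L Ainvh = 1) (hAinvh_r : Ainvh ∘L Ah = 1)
    (hAinv_l : A ∘L Ainv = 1)
    -- `C = B^{1/2}A^{-1/2}` has closed range and Moore–Penrose pseudoinverse of norm `k`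
    (k : ℝ) (Cdag : H →L[ℝ] H)
    (hMP1 : (S ∘L Ainvh) ∘L Cdag ∘L (S ∘L Ainvh) = S ∘L Ainvh)
    (hMP4 : IsSelfAdjoint (Cdag ∘L (S ∘L Ainvh)))
    (hk : ‖Cdag‖ = k)
    -- the resolvent family `R κ = H_κ⁻¹` and its strong limit `G = H_∞†`
    (R : ℝ → (H →L[ℝ] H))
    (hRl : ∀ κ : ℝ, (A + κ ^ 2 • B) ∘L R κ = 1)
    (hRr : ∀ κ : ℝ, R κ ∘L (A + κ ^ 2 • B) = 1)
    (G : H →L[ℝ] H)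
    (hG : ∀ f : H, Filter.Tendsto (fun κ => R κ f) Filter.atTop (nhds (G f))) :
    ∀ f ∈ closure ((LinearMap.ker (B : H →ₗ[ℝ] H) : Submodule ℝ H) : Set H), ∀ κ : ℝ, 0 < κ →
      ⟪f, R κ f⟫ - ⟪f, G f⟫ ≤ k ^ 2 * (⟪f, Ainv f⟫ - ⟪f, G f⟫) / κ ^ 2 := by
  intro f _ κ hκ
  have hRs : ∀ κ : ℝ, (R κ : H →ₗ[ℝ] H).IsSymmetric := fun κ =>
    isSymmetric_of_comp_eq_one (hA.add ((IsSelfAdjoint.all _).smul hB)).isSymmetric (hRl κ)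
  have hBG : B (G f) = 0 := map_apply_eq_zero_of_isSymmetric hB.isSymmetric
    (isSymmetric_of_tendsto hRs hG) (strongLimit_apply_map_eq_zero hRr hG) f
  have hR0 : R 0 = Ainv := left_inv_eq_right_inv (by simpa [← mul_def] using hRr 0) hAinv_l
  have hAsq : ∀ u v, ⟪A u, v⟫ = ⟪Ah u, Ah v⟫ := fun u v => by
    rw [← hAhsq]; exact hAh.isSymmetric (Ah u) v
  have hBsq : ∀ u, ⟪B u, u⟫ = ‖S u‖ ^ 2 := fun u => by
    rw [← hSsq, ← real_inner_self_eq_norm_sq]; exact hS.isSymmetric (S u) u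
  have hcross : ⟪A (R 0 f - G f), R κ f - G f⟫ = ⟪f, R κ f⟫ - ⟪f, G f⟫ := by
    have hAR0 : A (R 0 f) = f := by simpa using DFunLike.congr_fun (hRl 0) f
    rw [map_sub, hAR0, inner_sub_left,
      inner_map_resolvent_sub_strongLimit_eq_zero hRr hRs hG κ f hBG, sub_zero, inner_sub_right]
  have henergy := inner_resolvent_sub_inner_strongLimit κ (hRl κ) hRr hRs hG hBG
  have hx : ⟪f, R 0 f⟫ - ⟪f, G f⟫ = ⟪A (R 0 f - G f), R 0 f - G f⟫ := by
    simpa using inner_resolvent_sub_inner_strongLimit 0 (hRl 0) hRr hRs hG hBG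
  have hpinv : ‖Ah (R κ f - G f)‖ ≤ k * ‖S (R κ f - G f)‖ := hk ▸
    norm_sqrt_apply_le_opNorm_pinv_mul hAh.isSymmetric hAhsq hSsq hAinvh_l hAinvh_r hMP1
      hMP4.isSymmetric fun v hv => inner_map_resolvent_sub_strongLimit_eq_zero hRr hRs hG κ f hv
  rw [← hR0, hx, ← hcross, hAsq, hAsq, real_inner_self_eq_norm_sq]
  refine real_inner_le_of_sq_mul_norm_sq_le hκ ?_
  rw [← hAsq, hcross, henergy, hAsq, hBsq, real_inner_self_eq_norm_sq]
  have h2 : ‖Ah (R κ f - G f)‖ ^ 2 ≤ k ^ 2 * ‖S (R κ f - G f)‖ ^ 2 := by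
    rw [← mul_pow]; exact pow_le_pow_left₀ (norm_nonneg _) hpinv 2
  nlinarith [sq_nonneg k, sq_nonneg ‖Ah (R κ f - G f)‖]

/-- Upper estimate of Theorem 4.3: if `C = B^{1/2}A^{-1/2}` has closed range with
`‖C†‖ = k`, then for `f` in the closure of `N(B)` and `κ > 0`,
`(f, H_κ⁻¹f) − (f, H_∞†f) ≤ k²((f, A⁻¹f) − (f, H_∞†f))/κ²`, where `H_κ = A + κ²B` and
`H_∞† = s-lim H_κ⁻¹`. -/
theorem regular_large_coupling_upper_estimate
    {H : Type*} [NormedAddCommGroup H] [InnerProductSpace ℝ H] [CompleteSpace H]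
    (A B S Ah Ainvh Ainv : H →L[ℝ] H)
    (hA : IsSelfAdjoint A) (hB : IsSelfAdjoint B)
    (hApos : ∃ c > (0:ℝ), ∀ u : H, c * ‖u‖ ^ 2 ≤ ⟪u, A u⟫)
    (hBpos : ∀ u : H, 0 ≤ ⟪u, B u⟫)
    -- `S = B^{1/2}` and `Ah = A^{1/2}`, `Ainvh = A^{-1/2}`, `Ainv = A⁻¹`
    (hS : IsSelfAdjoint S) (hSpos : ∀ u : H, 0 ≤ ⟪u, S u⟫) (hSsq : S ∘L S = B)
    (hAh : IsSelfAdjoint Ah) (hAhpos : ∀ u : H, 0 ≤ ⟪u, Ah u⟫) (hAhsq : Ah ∘L Ah = A)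
    (hAinvh_l : Ah ∘L Ainvh = 1) (hAinvh_r : Ainvh ∘L Ah = 1)
    (hAinv_l : A ∘L Ainv = 1) (hAinv_r : Ainv ∘L A = 1)
    -- `C = B^{1/2}A^{-1/2}` has closed range and Moore–Penrose pseudoinverse of norm `k`
    (k : ℝ) (Cdag : H →L[ℝ] H)
    (hCrange : IsClosed (LinearMap.range ((S ∘L Ainvh : H →L[ℝ] H) : H →ₗ[ℝ] H) : Set H))
    (hMP1 : (S ∘L Ainvh) ∘L Cdag ∘L (S ∘L Ainvh) = S ∘L Ainvh)
    (hMP2 : Cdag ∘L (S ∘L Ainvh) ∘L Cdag = Cdag)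
    (hMP3 : IsSelfAdjoint ((S ∘L Ainvh) ∘L Cdag))
    (hMP4 : IsSelfAdjoint (Cdag ∘L (S ∘L Ainvh)))
    (hk : ‖Cdag‖ = k)
    -- the resolvent family `R κ = H_κ⁻¹` and its strong limit `G = H_∞†`
    (R : ℝ → (H →L[ℝ] H))
    (hRl : ∀ κ : ℝ, (A + κ ^ 2 • B) ∘L R κ = 1)
    (hRr : ∀ κ : ℝ, R κ ∘L (A + κ ^ 2 • B) = 1)
    (G : H →L[ℝ] H)
    (hG : ∀ f : H, Filter.Tendsto (fun κ => R κ f) Filter.atTop (nhds (G f))) :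
    ∀ f ∈ closure ((LinearMap.ker (B : H →ₗ[ℝ] H) : Submodule ℝ H) : Set H), ∀ κ : ℝ, 0 < κ →
      ⟪f, R κ f⟫ - ⟪f, G f⟫ ≤ k ^ 2 * (⟪f, Ainv f⟫ - ⟪f, G f⟫) / κ ^ 2 :=
  regular_large_coupling_upper_estimate_general A B S Ah Ainvh Ainv hA hB hS hSsq hAh hAhsq hAinvh_l
    hAinvh_r hAinv_l k Cdag hMP1 hMP4 hk R hRl hRr G hG
end

section
/- Let A be a bounded positive definite self-adjoint operator and B a bounded positive semidefinite self-adjoint operator on a Hilbert space, H_κ = A + κ²B, and H_∞† = s-lim_{κ→∞} H_κ⁻¹. Then for every vector f and every κ ≥ 1, (f, H_κ⁻¹f) − (f, H_∞†f) ≥ ((f, H₁⁻¹f) − (f, H_∞†f))/κ², where H₁ = A + B. -/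
local notation "⟪" x ", " y "⟫" => @inner ℝ _ _ x y

/-!
Write `g` for the strong limit `G f`. The bound `κ² ⟪R κ f, B (R κ f)⟫ ≤ ⟪R κ f, f⟫` forces
`⟪g, B g⟫ = 0`, hence `B g = 0`, so `R κ (A g) = g` for every `κ`. With `e = f - A g` this gives
`⟪f, R κ f⟫ - ⟪f, g⟫ = ⟪e, R κ e⟫`, and the claim becomes `⟪e, R 1 e⟫ ≤ κ² ⟪e, R κ e⟫`, i.e.
`(A + B)⁻¹ ≤ (κ⁻² A + B)⁻¹`: operator inversion is antitone and `κ⁻² A + B ≤ A + B`.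
-/

open Filter Topology

namespace ContinuousLinearMap

theorem isSymmetric_of_comp_eq_one {𝕜 E : Type*} [RCLike 𝕜] [NormedAddCommGroup E]
    [InnerProductSpace 𝕜 E] {S R : E →L[𝕜] E} (hS : S.IsSymmetric) (h : S ∘L R = 1) :
    R.IsSymmetric := by
  have hSR (x : E) : S (R x) = x := congr($h x)
  intro x y
  calc inner 𝕜 (R x) y = inner 𝕜 (R x) (S (R y)) := by rw [hSR]
    _ = inner 𝕜 (S (R x)) (R y) := (hS _ _).symm
    _ = inner 𝕜 x (R y) := by rw [hSR]

variable {E : Type*} [NormedAddCommGroup E] [InnerProductSpace ℝ E]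

theorem IsPositive.inner_apply_sq_le {S : E →L[ℝ] E} (hS : S.IsPositive) (p q : E) :
    ⟪p, S q⟫ ^ 2 ≤ ⟪p, S p⟫ * ⟪q, S q⟫ := by
  have hquad (t : ℝ) : 0 ≤ ⟪q, S q⟫ * (t * t) + (2 * ⟪p, S q⟫) * t + ⟪p, S p⟫ := by
    have hqp : ⟪q, S p⟫ = ⟪p, S q⟫ := by rw [← hS.inner_left_eq_inner_right, real_inner_comm]
    have := hS.inner_nonneg_right (p + t • q)
    simp only [map_add, map_smul, inner_add_left, inner_add_right, real_inner_smul_left,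
      real_inner_smul_right, hqp] at this
    linarith
  have := discrim_le_zero hquad
  rw [discrim] at this
  linarith

theorem IsPositive.apply_eq_zero_of_inner_apply_self_eq_zero {S : E →L[ℝ] E}
    (hS : S.IsPositive) {v : E} (hv : ⟪v, S v⟫ = 0) : S v = 0 := by
  have h := hS.inner_apply_sq_le (S v) v
  rw [hv, mul_zero, real_inner_self_eq_norm_sq] at h
  simpa using h

/-- Operator inversion is antitone, stated for the solutions `y = S⁻¹ e` and `z = T⁻¹ e`. -/
theorem inner_le_inner_of_le {S T : E →L[ℝ] E} (hS : 0 ≤ S) (hST : S ≤ T) {e y z : E}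
    (hy : S y = e) (hz : T z = e) : ⟪e, z⟫ ≤ ⟪e, y⟫ := by
  rw [nonneg_iff_isPositive] at hS
  rw [le_def] at hST
  have hdiff := hS.inner_nonneg_right (y - z)
  have hgap := hST.inner_nonneg_right z
  have hyy : ⟪y, S y⟫ = ⟪e, y⟫ := by rw [hy, real_inner_comm]
  have hyz : ⟪y, S z⟫ = ⟪e, z⟫ := by rw [← hS.inner_left_eq_inner_right, hy]
  have hzy : ⟪z, S y⟫ = ⟪e, z⟫ := by rw [hy, real_inner_comm]
  have hzz : ⟪z, T z⟫ = ⟪e, z⟫ := by rw [hz, real_inner_comm]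
  simp only [map_sub, inner_sub_left, inner_sub_right, sub_apply] at hdiff hgap
  linarith

end ContinuousLinearMap

section ResolventFamily

open ContinuousLinearMap

variable {E : Type*} [NormedAddCommGroup E] [InnerProductSpace ℝ E]

theorem inner_eq_of_tendsto_of_forall_apply_eq {ι : Type*} {l : Filter ι} [l.NeBot]
    {R : ι → E →L[ℝ] E} (hR : ∀ t, (R t).IsSymmetric) {f a g : E} (ha : ∀ t, R t a = g)
    (hg : Tendsto (fun t => R t f) l (𝓝 g)) : ⟪a, g⟫ = ⟪f, g⟫ := by
  have hconst (t : ι) : ⟪a, R t f⟫ = ⟪f, g⟫ := by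
    rw [← ha t, real_inner_comm]
    exact hR t f a
  have hlim : Tendsto (fun t => ⟪a, R t f⟫) l (𝓝 ⟪a, g⟫) := tendsto_const_nhds.inner hg
  simp only [hconst] at hlim
  exact tendsto_nhds_unique hlim tendsto_const_nhds

theorem inner_sub_apply_sub_eq {R : E →L[ℝ] E} (hR : R.IsSymmetric) {f a g : E}
    (ha : R a = g) (hag : ⟪a, g⟫ = ⟪f, g⟫) :
    ⟪f - a, R (f - a)⟫ = ⟪f, R f⟫ - ⟪f, g⟫ := by
  have hfa : ⟪a, R f⟫ = ⟪f, g⟫ := by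
    rw [← ha, real_inner_comm]
    exact hR f a
  simp only [map_sub, inner_sub_left, inner_sub_right, ha, hfa, hag]
  ring

variable {A B : E →L[ℝ] E} {R : ℝ → E →L[ℝ] E}

theorem apply_eq_zero_of_tendsto_resolvent (hA : A.IsPositive) (hB : B.IsPositive)
    (hR : ∀ t, (A + t ^ 2 • B) ∘L R t = 1) {f g : E}
    (hg : Tendsto (fun t => R t f) atTop (𝓝 g)) : B g = 0 := by
  have hbound (t : ℝ) : t ^ 2 * ⟪R t f, B (R t f)⟫ ≤ ⟪R t f, f⟫ := by
    have hRf : A (R t f) + t ^ 2 • B (R t f) = f := congr($(hR t) f)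
    generalize R t f = v at hRf ⊢
    have := hA.inner_nonneg_right v
    rw [← hRf, inner_add_right, real_inner_smul_right]
    linarith
  have hupper : Tendsto (fun t : ℝ => ⟪R t f, f⟫ / t ^ 2) atTop (𝓝 0) :=
    (hg.inner tendsto_const_nhds).div_atTop (tendsto_pow_atTop two_ne_zero)
  have hform : Tendsto (fun t => ⟪R t f, B (R t f)⟫) atTop (𝓝 ⟪g, B g⟫) :=
    hg.inner ((B.continuous.tendsto g).comp hg)
  have hzero : Tendsto (fun t => ⟪R t f, B (R t f)⟫) atTop (𝓝 0) := by
    refine tendsto_of_tendsto_of_tendsto_of_le_of_le' tendsto_const_nhds hupper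
      (Eventually.of_forall fun t => hB.inner_nonneg_right _) ?_
    filter_upwards [eventually_gt_atTop 0] with t ht
    rw [le_div_iff₀ (by positivity), mul_comm]
    exact hbound t
  exact hB.apply_eq_zero_of_inner_apply_self_eq_zero (tendsto_nhds_unique hform hzero)

theorem inner_resolvent_one_div_sq_le (hA : A.IsPositive) (hB : B.IsPositive)
    (hR : ∀ t, (A + t ^ 2 • B) ∘L R t = 1) {κ : ℝ} (hκ : 1 ≤ κ) (e : E) :
    ⟪e, R 1 e⟫ / κ ^ 2 ≤ ⟪e, R κ e⟫ := by
  have hκ2 : 0 < κ ^ 2 := by positivity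
  have hS : 0 ≤ (κ ^ 2)⁻¹ • (A + κ ^ 2 • B) :=
    (nonneg_iff_isPositive _).2 <|
      (hA.add (hB.smul_of_nonneg hκ2.le)).smul_of_nonneg (by positivity)
  have hST : (κ ^ 2)⁻¹ • (A + κ ^ 2 • B) ≤ A + (1 : ℝ) ^ 2 • B := by
    have hgap : A + (1 : ℝ) ^ 2 • B - (κ ^ 2)⁻¹ • (A + κ ^ 2 • B) = (1 - (κ ^ 2)⁻¹) • A := by
      rw [smul_add, smul_smul, inv_mul_cancel₀ hκ2.ne']
      module
    refine (le_def _ _).2 ?_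
    rw [hgap]
    exact hA.smul_of_nonneg (sub_nonneg.2 (inv_le_one_of_one_le₀ (one_le_pow₀ hκ)))
  have hy : ((κ ^ 2)⁻¹ • (A + κ ^ 2 • B)) (κ ^ 2 • R κ e) = e := by
    rw [smul_apply, map_smul, smul_smul, inv_mul_cancel₀ hκ2.ne', one_smul]
    exact congr($(hR κ) e)
  have hz : (A + (1 : ℝ) ^ 2 • B) (R 1 e) = e := congr($(hR 1) e)
  have := inner_le_inner_of_le hS hST hy hz
  rw [real_inner_smul_right] at this
  rw [div_le_iff₀ hκ2]
  linarith

end ResolventFamily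

/-- Lower estimate of Theorem 4.3: for `H_κ = A + κ²B`, `H_∞† = s-lim H_κ⁻¹` and every `f`
and `κ ≥ 1`, one has `(f, H_κ⁻¹f) − (f, H_∞†f) ≥ ((f, H₁⁻¹f) − (f, H_∞†f))/κ²`, where
`H₁ = A + B`. -/
theorem regular_large_coupling_lower_estimate
    {H : Type*} [NormedAddCommGroup H] [InnerProductSpace ℝ H] [CompleteSpace H]
    (A B : H →L[ℝ] H) (hA : IsSelfAdjoint A) (hB : IsSelfAdjoint B)
    (hApos : ∃ c > (0:ℝ), ∀ u : H, c * ‖u‖ ^ 2 ≤ ⟪u, A u⟫)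
    (hBpos : ∀ u : H, 0 ≤ ⟪u, B u⟫)
    (R : ℝ → (H →L[ℝ] H))
    (hRl : ∀ κ : ℝ, (A + κ ^ 2 • B) ∘L R κ = 1)
    (hRr : ∀ κ : ℝ, R κ ∘L (A + κ ^ 2 • B) = 1)
    (G : H →L[ℝ] H)
    (hG : ∀ f : H, Filter.Tendsto (fun κ => R κ f) Filter.atTop (nhds (G f))) :
    ∀ f : H, ∀ κ : ℝ, 1 ≤ κ →
      (⟪f, R 1 f⟫ - ⟪f, G f⟫) / κ ^ 2 ≤ ⟪f, R κ f⟫ - ⟪f, G f⟫ := by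
  intro f κ hκ
  obtain ⟨c, hc, hcA⟩ := hApos
  have hA0 : A.IsPositive := (ContinuousLinearMap.isPositive_iff' A).2 ⟨hA, fun u => by
    rw [real_inner_comm]; exact (by positivity : 0 ≤ c * ‖u‖ ^ 2).trans (hcA u)⟩
  have hB0 : B.IsPositive := (ContinuousLinearMap.isPositive_iff' B).2 ⟨hB, fun u => by
    rw [real_inner_comm]; exact hBpos u⟩
  have hRsym (t : ℝ) : (R t).IsSymmetric :=
    ContinuousLinearMap.isSymmetric_of_comp_eq_one
      (hA0.add (hB0.smul_of_nonneg (sq_nonneg t))).isSymmetric (hRl t)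
  have hBG : B (G f) = 0 := apply_eq_zero_of_tendsto_resolvent hA0 hB0 hRl (hG f)
  have hRAG (t : ℝ) : R t (A (G f)) = G f := by
    simpa [hBG] using congr($(hRr t) (G f))
  have hshift (t : ℝ) : ⟪f, R t f⟫ - ⟪f, G f⟫ = ⟪f - A (G f), R t (f - A (G f))⟫ :=
    (inner_sub_apply_sub_eq (hRsym t) (hRAG t)
      (inner_eq_of_tendsto_of_forall_apply_eq hRsym hRAG (hG f))).symm
  rw [hshift, hshift]
  exact inner_resolvent_one_div_sq_le hA0 hB0 hRl hκ _
end

section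
/- Let λ > 0 with λ < κ² solve √(κ² − λ) = −√λ·cot(√λ) with 0 < √λ < π. Then the function u(x) defined by u(x) = sin(√λ x) for 0 ≤ x ≤ 1 and u(x) = sin(√λ)·exp(−√(κ²−λ)(x−1)) for x ≥ 1 is continuous on [0,∞), continuously differentiable on (0,∞), satisfies u(0)=0, u ∈ L²(0,∞), and solves −u'' + κ²·χ_{[1,∞)}·u = λu pointwise on (0,1) and (1,∞). -/
/-!
On each side of `x = 1` the function solves the constant-coefficient equation explicitly:
`sin (√λ x)` solves `-u'' = λu` and `sin √λ · e^{-√(κ²-λ)(x-1)}` solves `-u'' + κ²u = λu`.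
Both pieces equal `sin √λ` at `1`, and the eigenvalue equation, in the form
`√(κ²-λ) sin √λ = -√λ cos √λ`, says precisely that their derivatives agree there, so the glued
function is `C¹`. The exponential tail makes it square integrable.
-/

open MeasureTheory Set Real Filter Topology

section Glue

theorem ite_le_eventuallyEq_left {α : Type*} {f g : ℝ → α} {a x : ℝ} (hx : x < a) :
    (fun y => if y ≤ a then f y else g y) =ᶠ[𝓝 x] f := by
  filter_upwards [Iio_mem_nhds hx] with y hy
  rw [if_pos hy.le]

theorem ite_le_eventuallyEq_right {α : Type*} {f g : ℝ → α} {a x : ℝ} (hx : a < x) :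
    (fun y => if y ≤ a then f y else g y) =ᶠ[𝓝 x] g := by
  filter_upwards [Ioi_mem_nhds hx] with y hy
  rw [if_neg (not_le.mpr hy)]

variable {E : Type*} [NormedAddCommGroup E] [NormedSpace ℝ E] {f g : ℝ → E} {a x : ℝ}

theorem HasDerivAt.ite_le {d : E} (hf : HasDerivAt f d a) (hg : HasDerivAt g d a)
    (hfg : f a = g a) : HasDerivAt (fun y => if y ≤ a then f y else g y) d a := by
  have hleft : HasDerivWithinAt (fun y => if y ≤ a then f y else g y) d (Iic a) a :=
    hf.hasDerivWithinAt.congr (fun y hy => if_pos hy) (if_pos le_rfl)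
  have hright : HasDerivWithinAt (fun y => if y ≤ a then f y else g y) d (Ici a) a := by
    refine hg.hasDerivWithinAt.congr (fun y hy => ?_) (by rw [if_pos le_rfl, hfg])
    rcases (mem_Ici.mp hy).eq_or_lt with rfl | hlt
    · rw [if_pos le_rfl, hfg]
    · rw [if_neg (not_le.mpr hlt)]
  simpa only [Iic_union_Ici, hasDerivWithinAt_univ] using hleft.union hright

variable {f' g' : ℝ → E}

theorem hasDerivAt_ite_le (hf : ∀ y, HasDerivAt f (f' y) y) (hg : ∀ y, HasDerivAt g (g' y) y)
    (hfg : f a = g a) (hfg' : f' a = g' a) (x : ℝ) :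
    HasDerivAt (fun y => if y ≤ a then f y else g y) (if x ≤ a then f' x else g' x) x := by
  rcases lt_trichotomy x a with hx | rfl | hx
  · rw [if_pos hx.le]
    exact (hf x).congr_of_eventuallyEq (ite_le_eventuallyEq_left hx)
  · rw [if_pos le_rfl]
    exact (hf x).ite_le (hfg' ▸ hg x) hfg
  · rw [if_neg (not_le.mpr hx)]
    exact (hg x).congr_of_eventuallyEq (ite_le_eventuallyEq_right hx)

theorem continuous_deriv_ite_le (hf : ∀ y, HasDerivAt f (f' y) y)
    (hg : ∀ y, HasDerivAt g (g' y) y) (hf' : Continuous f') (hg' : Continuous g')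
    (hfg : f a = g a) (hfg' : f' a = g' a) :
    Continuous (deriv fun y => if y ≤ a then f y else g y) := by
  have hderiv : (deriv fun y => if y ≤ a then f y else g y) =
      fun y => if y ≤ a then f' y else g' y :=
    funext fun y => (hasDerivAt_ite_le hf hg hfg hfg' y).deriv
  rw [hderiv]
  exact (hf'.if_le hg' continuous_id continuous_const fun y (hy : y = a) => hy ▸ hfg')

theorem deriv_deriv_ite_le_of_lt (hx : x < a) :
    deriv (deriv fun y => if y ≤ a then f y else g y) x = deriv (deriv f) x :=
  (ite_le_eventuallyEq_left hx).deriv.deriv_eq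

theorem deriv_deriv_ite_le_of_gt (hx : a < x) :
    deriv (deriv fun y => if y ≤ a then f y else g y) x = deriv (deriv g) x :=
  (ite_le_eventuallyEq_right hx).deriv.deriv_eq

end Glue

theorem hasDerivAt_sin_mul (s x : ℝ) :
    HasDerivAt (fun y => sin (s * y)) (s * cos (s * x)) x :=
  ((hasDerivAt_id' x).const_mul s).sin.congr_deriv (by ring)

theorem deriv_deriv_sin_mul (s x : ℝ) :
    deriv (deriv fun y => sin (s * y)) x = -(s ^ 2 * sin (s * x)) := by
  have hderiv : (deriv fun y => sin (s * y)) = fun y => s * cos (s * y) :=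
    funext fun y => (hasDerivAt_sin_mul s y).deriv
  have hcos : HasDerivAt (fun y => s * cos (s * y)) (-(s ^ 2 * sin (s * x))) x :=
    ((((hasDerivAt_id' x).const_mul s).cos).const_mul s).congr_deriv (by ring)
  rw [hderiv, hcos.deriv]

theorem hasDerivAt_const_mul_exp_mul_sub (c k a x : ℝ) :
    HasDerivAt (fun y => c * exp (k * (y - a))) (k * (c * exp (k * (x - a)))) x :=
  ((((hasDerivAt_id' x).sub_const a).const_mul k).exp.const_mul c).congr_deriv (by ring)

theorem deriv_deriv_const_mul_exp_mul_sub (c k a x : ℝ) :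
    deriv (deriv fun y => c * exp (k * (y - a))) x = k ^ 2 * (c * exp (k * (x - a))) := by
  have hderiv : (deriv fun y => c * exp (k * (y - a))) = fun y => k * (c * exp (k * (y - a))) :=
    funext fun y => (hasDerivAt_const_mul_exp_mul_sub c k a y).deriv
  rw [hderiv, ((hasDerivAt_const_mul_exp_mul_sub c k a x).const_mul k).deriv]
  ring

theorem integrableOn_sq_const_mul_exp_neg_mul_sub {m : ℝ} (hm : 0 < m) (c a : ℝ) :
    IntegrableOn (fun x => (c * exp (-m * (x - a))) ^ 2) (Ioi a) := by
  refine IntegrableOn.congr_fun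
    ((exp_neg_integrableOn_Ioi a (by positivity : 0 < 2 * m)).const_mul (c ^ 2 * exp (2 * m * a)))
    (fun x _ => ?_) measurableSet_Ioi
  rw [mul_pow, ← exp_nat_mul, mul_assoc, ← exp_add]
  congr 2
  push_cast; ring

theorem sin_ne_zero_of_eq_neg_mul_cot {m s : ℝ} (hm : m ≠ 0) (h : m = -(s * (cos s / sin s))) :
    sin s ≠ 0 := by
  -- since `x / 0 = 0`, a vanishing `sin s` would force `m = 0`
  rintro hsin
  rw [hsin, div_zero, mul_zero, neg_zero] at h
  exact hm h

theorem ne_zero_of_eq_neg_mul_cot {m s : ℝ} (hm : m ≠ 0) (h : m = -(s * (cos s / sin s))) :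
    s ≠ 0 := by
  rintro rfl
  rw [zero_mul, neg_zero] at h
  exact hm h

theorem mul_sin_eq_of_eq_neg_mul_cot {m s : ℝ} (hm : m ≠ 0) (h : m = -(s * (cos s / sin s))) :
    m * sin s = -(s * cos s) := by
  have hsin := sin_ne_zero_of_eq_neg_mul_cot hm h
  rw [h]
  field_simp

/-- With `s = √λ` and `m = √(κ² - λ)` this is the eigenfunction `u` of `H_κ`. -/
noncomputable def sinExpProfile (s m x : ℝ) : ℝ :=
  if x ≤ 1 then sin (s * x) else sin s * exp (-m * (x - 1))

section sinExpProfile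

variable {s m : ℝ}

theorem sinExpProfile_zero : sinExpProfile s m 0 = 0 := by
  simp [sinExpProfile]

theorem continuous_sinExpProfile : Continuous (sinExpProfile s m) :=
  Continuous.if_le (by fun_prop) (by fun_prop) continuous_id continuous_const
    fun x (hx : x = 1) => by simp [hx]

theorem hasDerivAt_sinExpProfile (h : m * sin s = -(s * cos s)) (x : ℝ) :
    HasDerivAt (sinExpProfile s m)
      (if x ≤ 1 then s * cos (s * x) else -m * (sin s * exp (-m * (x - 1)))) x :=
  hasDerivAt_ite_le (hasDerivAt_sin_mul s) (hasDerivAt_const_mul_exp_mul_sub _ _ _)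
    (by simp) (by simp [h]) x

theorem continuous_deriv_sinExpProfile (h : m * sin s = -(s * cos s)) :
    Continuous (deriv (sinExpProfile s m)) :=
  continuous_deriv_ite_le (hasDerivAt_sin_mul s) (hasDerivAt_const_mul_exp_mul_sub _ _ _)
    (by fun_prop) (by fun_prop) (by simp) (by simp [h])

theorem deriv_deriv_sinExpProfile_of_lt_one {x : ℝ} (hx : x < 1) :
    deriv (deriv (sinExpProfile s m)) x = -(s ^ 2 * sinExpProfile s m x) := by
  rw [sinExpProfile, if_pos hx.le]
  exact (deriv_deriv_ite_le_of_lt hx).trans (deriv_deriv_sin_mul s x)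

theorem deriv_deriv_sinExpProfile_of_one_lt {x : ℝ} (hx : 1 < x) :
    deriv (deriv (sinExpProfile s m)) x = m ^ 2 * sinExpProfile s m x := by
  rw [sinExpProfile, if_neg (not_le.mpr hx)]
  exact (deriv_deriv_ite_le_of_gt hx).trans (by rw [deriv_deriv_const_mul_exp_mul_sub, neg_sq])

theorem memLp_two_sinExpProfile (hm : 0 < m) :
    MemLp (sinExpProfile s m) 2 (volume.restrict (Ioi 0)) := by
  rw [memLp_two_iff_integrable_sq continuous_sinExpProfile.aestronglyMeasurable.restrict,
    ← Ioc_union_Ioi_eq_Ioi zero_le_one]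
  refine (continuous_sinExpProfile.pow 2).integrableOn_Ioc.union ?_
  refine (integrableOn_sq_const_mul_exp_neg_mul_sub hm (sin s) 1).congr_fun
    (fun x (hx : 1 < x) => ?_) measurableSet_Ioi
  rw [Pi.pow_apply, sinExpProfile, if_neg (not_le.mpr hx)]

end sinExpProfile

theorem eigenfunction_verification_obstacle_general (κ lam : ℝ)
    (hlt : lam < κ ^ 2)
    (heq : Real.sqrt (κ ^ 2 - lam)
      = -(Real.sqrt lam * (Real.cos (Real.sqrt lam) / Real.sin (Real.sqrt lam)))) :
    ∀ u : ℝ → ℝ,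
      (∀ x, x ≤ 1 → u x = Real.sin (Real.sqrt lam * x)) →
      (∀ x, 1 ≤ x → u x = Real.sin (Real.sqrt lam)
          * Real.exp (-(Real.sqrt (κ ^ 2 - lam)) * (x - 1))) →
      u 0 = 0 ∧
      ContinuousOn u (Ici 0) ∧
      (∀ x ∈ Ioi (0:ℝ), DifferentiableAt ℝ u x) ∧
      ContinuousOn (deriv u) (Ioi 0) ∧
      MemLp u 2 (volume.restrict (Ioi (0:ℝ))) ∧
      (∀ x ∈ Ioo (0:ℝ) 1, -(deriv (deriv u) x) = lam * u x) ∧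
      (∀ x ∈ Ioi (1:ℝ), -(deriv (deriv u) x) + κ ^ 2 * u x = lam * u x) := by
  intro u hu₁ hu₂
  have hgap : 0 < κ ^ 2 - lam := sub_pos.mpr hlt
  have hm : 0 < √(κ ^ 2 - lam) := sqrt_pos.mpr hgap
  have hmatch : √(κ ^ 2 - lam) * sin √lam = -(√lam * cos √lam) :=
    mul_sin_eq_of_eq_neg_mul_cot hm.ne' heq
  have hs : √lam ^ 2 = lam :=
    sq_sqrt (sqrt_ne_zero'.mp (ne_zero_of_eq_neg_mul_cot hm.ne' heq)).le
  obtain rfl : u = sinExpProfile √lam √(κ ^ 2 - lam) := funext fun x => by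
    rcases le_or_gt x 1 with hx | hx
    · rw [hu₁ x hx, sinExpProfile, if_pos hx]
    · rw [hu₂ x hx.le, sinExpProfile, if_neg (not_le.mpr hx)]
  refine ⟨sinExpProfile_zero, continuous_sinExpProfile.continuousOn,
    fun x _ => (hasDerivAt_sinExpProfile hmatch x).differentiableAt,
    (continuous_deriv_sinExpProfile hmatch).continuousOn, memLp_two_sinExpProfile hm,
    fun x hx => ?_, fun x hx => ?_⟩
  · rw [deriv_deriv_sinExpProfile_of_lt_one hx.2, neg_neg, hs]
  · rw [deriv_deriv_sinExpProfile_of_one_lt hx, sq_sqrt hgap.le]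
    ring

/-- Verification of the eigenfunction for `H_κ = −d²/dx² + κ²χ_{[1,∞)}` on `L²(0,∞)` with
Dirichlet condition at `0`: if `0 < λ < κ²`, `0 < √λ < π` and
`√(κ² − λ) = −√λ·cot(√λ)`, then the piecewise function
`u(x) = sin(√λ x)` on `[0,1]`, `u(x) = sin(√λ)·e^{−√(κ²−λ)(x−1)}` on `[1,∞)` is continuous on
`[0,∞)`, continuously differentiable on `(0,∞)`, vanishes at `0`, lies in `L²(0,∞)`, and
satisfies `−u'' + κ²χ_{[1,∞)}u = λu` pointwise on `(0,1)` and `(1,∞)`. -/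
theorem eigenfunction_verification_obstacle (κ lam : ℝ)
    (hlam : 0 < lam) (hlt : lam < κ ^ 2)
    (hroot : Real.sqrt lam < Real.pi)
    (heq : Real.sqrt (κ ^ 2 - lam)
      = -(Real.sqrt lam * (Real.cos (Real.sqrt lam) / Real.sin (Real.sqrt lam)))) :
    ∀ u : ℝ → ℝ,
      (∀ x, x ≤ 1 → u x = Real.sin (Real.sqrt lam * x)) →
      (∀ x, 1 ≤ x → u x = Real.sin (Real.sqrt lam)
          * Real.exp (-(Real.sqrt (κ ^ 2 - lam)) * (x - 1))) →
      u 0 = 0 ∧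
      ContinuousOn u (Ici 0) ∧
      (∀ x ∈ Ioi (0:ℝ), DifferentiableAt ℝ u x) ∧
      ContinuousOn (deriv u) (Ioi 0) ∧
      MemLp u 2 (volume.restrict (Ioi (0:ℝ))) ∧
      (∀ x ∈ Ioo (0:ℝ) 1, -(deriv (deriv u) x) = lam * u x) ∧
      (∀ x ∈ Ioi (1:ℝ), -(deriv (deriv u) x) + κ ^ 2 * u x = lam * u x) :=
  eigenfunction_verification_obstacle_general κ lam hlt heq
end

section
/- For each κ > 5, the smallest solution λ₁^κ ∈ (π²/2, π²) of the equation √(κ² − λ) = −√λ·cot(√λ) satisfies λ₁^κ < π² = λ₁^∞ and (λ₁^∞ − λ₁^κ)/λ₁^∞ ≤ 10/(3κ) + o(1/κ) as κ → ∞; in particular (λ₁^∞ − λ₁^κ)/λ₁^∞ → 0, i.e. λ₁^κ → π². -/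
open Filter Asymptotics Real Set

/-!
Substituting `λ = x²`, the equation reads `secular κ x = √(κ² - x²) + x cot x = 0` with
`x ∈ (0, π)`. Both summands decrease strictly on `(0, π)` (the second because
`sin x cos x < x`), so there is at most one root, and the intermediate value theorem applied to
`sin x · secular κ x`, which equals `-π` at `x = π`, places it in `(3π/4, π)`. With `δ = π - x`
the equation becomes `√(κ² - x²) = x cot δ < x / δ`, hence `δ < π / √(κ² - x²) ≤ 4π / (3κ)` and
`π² - x² = δ (π + x) ≤ 8π² / (3κ)`, which is `O(1/κ)` and already below `10/(3κ)` relative to `π²`.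
-/

namespace LowestEigenvalue

lemma pi_sq_lt_ten : π ^ 2 < 10 := by
  nlinarith [pi_lt_d2, pi_gt_three]

noncomputable def secular (κ x : ℝ) : ℝ := √(κ ^ 2 - x ^ 2) + x * (cos x / sin x)

lemma strictAntiOn_sqrt_sq_sub_sq {κ : ℝ} (hκ : 0 ≤ κ) :
    StrictAntiOn (fun x => √(κ ^ 2 - x ^ 2)) (Icc 0 κ) := by
  intro a ha b hb hab
  exact sqrt_lt_sqrt (by nlinarith [hb.1, hb.2]) (by nlinarith [ha.1])

lemma hasDerivAt_mul_cos_div_sin {x : ℝ} (hx : sin x ≠ 0) :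
    HasDerivAt (fun x => x * (cos x / sin x)) ((sin x * cos x - x) / sin x ^ 2) x :=
  ((hasDerivAt_id' x).mul ((hasDerivAt_cos x).div (hasDerivAt_sin x) hx)).congr_deriv <| by
    simp only [Pi.div_apply]
    field_simp
    linear_combination -x * sin_sq_add_cos_sq x

lemma strictAntiOn_mul_cos_div_sin : StrictAntiOn (fun x => x * (cos x / sin x)) (Ioo 0 π) := by
  have hsin : ∀ x ∈ Ioo 0 π, sin x ≠ 0 := fun x hx => (sin_pos_of_mem_Ioo hx).ne'
  refine strictAntiOn_of_hasDerivWithinAt_neg (convex_Ioo 0 π)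
    (fun x hx => (hasDerivAt_mul_cos_div_sin (hsin x hx)).continuousAt.continuousWithinAt)
    (f' := fun x => (sin x * cos x - x) / sin x ^ 2) ?_ ?_ <;> rw [interior_Ioo]
  · exact fun x hx => (hasDerivAt_mul_cos_div_sin (hsin x hx)).hasDerivWithinAt
  intro x hx
  have hsin2 : sin x * cos x < x := by
    have := sin_lt (by linarith [hx.1] : 0 < 2 * x)
    rw [sin_two_mul] at this
    linarith
  exact div_neg_of_neg_of_pos (by linarith) (pow_pos (sin_pos_of_mem_Ioo hx) 2)

lemma secular_strictAntiOn {κ : ℝ} (hκ : π ≤ κ) : StrictAntiOn (secular κ) (Ioo 0 π) :=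
  fun _ ha _ hb hab =>
    add_lt_add (strictAntiOn_sqrt_sq_sub_sq (pi_pos.le.trans hκ)
      ⟨ha.1.le, ha.2.le.trans hκ⟩ ⟨hb.1.le, hb.2.le.trans hκ⟩ hab)
      (strictAntiOn_mul_cos_div_sin ha hb hab)

noncomputable def eigenSet (κ : ℝ) : Set ℝ :=
  {lam | lam ∈ Ioo 0 (π ^ 2) ∧ √(κ ^ 2 - lam) = -(√lam * (cos √lam / sin √lam))}

lemma eigenSet_eq_image (κ : ℝ) :
    eigenSet κ = (· ^ 2) '' {x ∈ Ioo 0 π | secular κ x = 0} := by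
  ext lam
  constructor
  · rintro ⟨⟨hlam, hlamπ⟩, heq⟩
    refine ⟨√lam, ⟨⟨sqrt_pos.2 hlam, ?_⟩, ?_⟩, sq_sqrt hlam.le⟩
    · exact (sqrt_lt' pi_pos).2 hlamπ
    · rw [secular, sq_sqrt hlam.le, heq]
      ring
  · rintro ⟨x, ⟨⟨hx, hxπ⟩, hsec⟩, rfl⟩
    refine ⟨⟨by positivity, pow_lt_pow_left₀ hxπ hx.le two_ne_zero⟩, ?_⟩
    rw [sqrt_sq hx.le]
    rw [secular] at hsec
    linear_combination hsec

lemma exists_secular_eq_zero {κ : ℝ} (hκ : 9 * π ^ 2 / 8 < κ ^ 2) :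
    ∃ x ∈ Ioo (3 * π / 4) π, secular κ x = 0 := by
  set G : ℝ → ℝ := fun x => √(κ ^ 2 - x ^ 2) * sin x + x * cos x
  have hsin : ∀ x ∈ Ioo (3 * π / 4) π, sin x ≠ 0 := fun x hx =>
    (sin_pos_of_mem_Ioo ⟨by linarith [hx.1, pi_pos], hx.2⟩).ne'
  have hG : ∀ x ∈ Ioo (3 * π / 4) π, G x = sin x * secular κ x := fun x hx => by
    have := hsin x hx
    simp only [G, secular]
    field_simp
  have hGπ : G π < 0 := by simp [G, pi_pos]
  have hG34 : 0 < G (3 * π / 4) := by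
    have hsin : sin (3 * π / 4) = √2 / 2 := by
      rw [show 3 * π / 4 = π - π / 4 by ring, sin_pi_sub, sin_pi_div_four]
    have hcos : cos (3 * π / 4) = -(√2 / 2) := by
      rw [show 3 * π / 4 = π - π / 4 by ring, cos_pi_sub, cos_pi_div_four]
    have hroot : 3 * π / 4 < √(κ ^ 2 - (3 * π / 4) ^ 2) :=
      lt_sqrt_of_sq_lt (by nlinarith)
    simp only [G, hsin, hcos]
    nlinarith [sqrt_pos.2 (show (0 : ℝ) < 2 by norm_num)]
  have hcont : ContinuousOn G (Icc (3 * π / 4) π) := by fun_prop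
  obtain ⟨x, hx, hGx⟩ :=
    intermediate_value_Ioo' (by linarith [pi_pos]) hcont ⟨hGπ, hG34⟩
  refine ⟨x, hx, ?_⟩
  rw [hG x hx] at hGx
  exact (mul_eq_zero.1 hGx).resolve_left (hsin x hx)

lemma pi_sub_mul_sqrt_lt {κ x : ℝ} (hx : x ∈ Ioo (π / 2) π) (h : secular κ x = 0) :
    (π - x) * √(κ ^ 2 - x ^ 2) < x := by
  set δ := π - x
  have hδ0 : 0 < δ := by linarith [hx.2]
  have hδπ : δ < π / 2 := by linarith [hx.1]
  have hsin : 0 < sin δ := sin_pos_of_pos_of_lt_pi hδ0 (by linarith)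
  have hcos : 0 < cos δ := cos_pos_of_mem_Ioo ⟨by linarith, hδπ⟩
  have hsinx : sin x = sin δ := (sin_pi_sub x).symm
  have hcosx : cos x = -cos δ := by rw [cos_pi_sub, neg_neg]
  have hroot : √(κ ^ 2 - x ^ 2) * sin δ = x * cos δ := by
    rw [secular, hsinx, hcosx] at h
    field_simp at h
    linarith
  have htan : δ * cos δ < sin δ := by
    have := lt_tan hδ0 hδπ
    rwa [tan_eq_sin_div_cos, lt_div_iff₀ hcos] at this
  refine lt_of_mul_lt_mul_right ?_ hsin.le
  calc (π - x) * √(κ ^ 2 - x ^ 2) * sin δ = x * (δ * cos δ) := by rw [mul_assoc, hroot]; ring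
    _ < x * sin δ := mul_lt_mul_of_pos_left htan (by linarith [hx.1, pi_pos])

lemma pi_sq_sub_sq_le {κ x : ℝ} (hκ : 5 < κ) (hx : x ∈ Ioo (π / 2) π) (h : secular κ x = 0) :
    π ^ 2 - x ^ 2 ≤ 8 * π ^ 2 / (3 * κ) := by
  have hx0 : 0 < x := by linarith [hx.1, pi_pos]
  have hsqrt : 3 * κ / 4 ≤ √(κ ^ 2 - x ^ 2) :=
    le_sqrt_of_sq_le (by nlinarith [hx.2, pi_sq_lt_ten])
  have hgap : (π - x) * (3 * κ / 4) < π :=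
    calc (π - x) * (3 * κ / 4) ≤ (π - x) * √(κ ^ 2 - x ^ 2) := by
          gcongr
          linarith [hx.2]
      _ < x := pi_sub_mul_sqrt_lt hx h
      _ < π := hx.2
  rw [le_div_iff₀ (by positivity)]
  nlinarith [hx.2]

lemma exists_eigenSet_eq_singleton {κ : ℝ} (hκ : 5 < κ) :
    ∃ lam, eigenSet κ = {lam} ∧ lam ∈ Ioo (π ^ 2 / 2) (π ^ 2) ∧
      π ^ 2 - lam ≤ 8 * π ^ 2 / (3 * κ) := by
  obtain ⟨x, hx, hsec⟩ := exists_secular_eq_zero (κ := κ) (by nlinarith [pi_sq_lt_ten])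
  have hx0 : x ∈ Ioo 0 π := ⟨by linarith [hx.1, pi_pos], hx.2⟩
  have hzeros : {y ∈ Ioo 0 π | secular κ y = 0} = {x} :=
    eq_singleton_iff_unique_mem.2 ⟨⟨hx0, hsec⟩, fun y hy =>
      (secular_strictAntiOn (by linarith [pi_lt_d2])).injOn hy.1 hx0 (hy.2.trans hsec.symm)⟩
  refine ⟨x ^ 2, by rw [eigenSet_eq_image, hzeros, image_singleton],
    ⟨by nlinarith [hx.1, pi_pos], pow_lt_pow_left₀ hx.2 hx0.1.le two_ne_zero⟩,
    pi_sq_sub_sq_le hκ ⟨by linarith [hx.1, pi_pos], hx.2⟩ hsec⟩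

noncomputable def lowestEigenvalue (κ : ℝ) : ℝ :=
  if h : 5 < κ then (exists_eigenSet_eq_singleton h).choose else π ^ 2

lemma lowestEigenvalue_spec {κ : ℝ} (hκ : 5 < κ) :
    eigenSet κ = {lowestEigenvalue κ} ∧ lowestEigenvalue κ ∈ Ioo (π ^ 2 / 2) (π ^ 2) ∧
      π ^ 2 - lowestEigenvalue κ ≤ 8 * π ^ 2 / (3 * κ) := by
  rw [lowestEigenvalue, dif_pos hκ]
  exact (exists_eigenSet_eq_singleton hκ).choose_spec

lemma pi_sq_sub_lowestEigenvalue_isBigO :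
    (fun κ => π ^ 2 - lowestEigenvalue κ) =O[atTop] (fun κ => 1 / κ) := by
  refine IsBigO.of_bound (8 * π ^ 2 / 3) ?_
  filter_upwards [eventually_gt_atTop 5] with κ hκ
  obtain ⟨-, ⟨-, hlt⟩, hle⟩ := lowestEigenvalue_spec hκ
  rw [norm_of_nonneg (by linarith), norm_of_nonneg (by positivity)]
  calc π ^ 2 - lowestEigenvalue κ ≤ 8 * π ^ 2 / (3 * κ) := hle
    _ = 8 * π ^ 2 / 3 * (1 / κ) := by field_simp

lemma tendsto_lowestEigenvalue : Tendsto lowestEigenvalue atTop (nhds (π ^ 2)) := by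
  have h := pi_sq_sub_lowestEigenvalue_isBigO.trans_tendsto
    (by simpa only [one_div] using tendsto_inv_atTop_zero)
  have h' := (tendsto_const_nhds (x := π ^ 2)).sub h
  rw [sub_zero] at h'
  exact h'.congr fun κ => sub_sub_cancel _ _

end LowestEigenvalue

open LowestEigenvalue in
/-- For `κ > 5` the smallest solution `λ₁^κ` of `√(κ² − λ) = −√λ·cot(√λ)` in `(0, π²)` exists,
lies in `(π²/2, π²)`, satisfies `λ₁^κ < π² = λ₁^∞` and
`(λ₁^∞ − λ₁^κ)/λ₁^∞ ≤ 10/(3κ) + o(1/κ)`; in particular `λ₁^κ → π²` as `κ → ∞`, with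
`π² − λ₁^κ = O(1/κ)`. -/
theorem lowest_eigenvalue_asymptotics :
    ∃ l : ℝ → ℝ,
      (∀ κ : ℝ, 5 < κ →
        IsLeast {lam : ℝ | lam ∈ Set.Ioo 0 (Real.pi ^ 2) ∧
          Real.sqrt (κ ^ 2 - lam)
            = -(Real.sqrt lam * (Real.cos (Real.sqrt lam) / Real.sin (Real.sqrt lam)))}
          (l κ)) ∧
      (∀ κ : ℝ, 5 < κ → l κ ∈ Set.Ioo (Real.pi ^ 2 / 2) (Real.pi ^ 2)) ∧
      (∀ κ : ℝ, 5 < κ → l κ < Real.pi ^ 2) ∧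
      Tendsto l atTop (nhds (Real.pi ^ 2)) ∧
      (fun κ => Real.pi ^ 2 - l κ) =O[atTop] (fun κ => 1 / κ) ∧
      ∃ e : ℝ → ℝ, e =o[atTop] (fun κ : ℝ => 1 / κ) ∧
        ∀ κ : ℝ, 5 < κ →
          (Real.pi ^ 2 - l κ) / Real.pi ^ 2 ≤ 10 / (3 * κ) + e κ := by
  refine ⟨lowestEigenvalue, fun κ hκ => ?_, fun κ hκ => (lowestEigenvalue_spec hκ).2.1,
    fun κ hκ => (lowestEigenvalue_spec hκ).2.1.2, tendsto_lowestEigenvalue,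
    pi_sq_sub_lowestEigenvalue_isBigO, 0, isLittleO_zero _ _, fun κ hκ => ?_⟩
  · change IsLeast (eigenSet κ) _
    rw [(lowestEigenvalue_spec hκ).1]
    exact isLeast_singleton
  · rw [Pi.zero_apply, add_zero, div_le_iff₀ (by positivity)]
    calc π ^ 2 - lowestEigenvalue κ ≤ 8 * π ^ 2 / (3 * κ) := (lowestEigenvalue_spec hκ).2.2
      _ ≤ 10 / (3 * κ) * π ^ 2 := by
        rw [div_mul_eq_mul_div]
        gcongr
        norm_num
end

section
/- Let H be a bounded positive definite self-adjoint operator on a Hilbert space, P an orthogonal projection with finite-dimensional range, P_⊥ = I − P, and define the block-diagonal part H_P via the form h_P(u,v) = (H^{1/2}Pu, H^{1/2}Pv) + (H^{1/2}P_⊥u, H^{1/2}P_⊥v). Then η_max(P) := sup_{u ≠ 0} |h[u] − h_P[u]|/h_P[u] < 1, where h[u] = ‖H^{1/2}u‖² and h_P[u] = ‖H^{1/2}Pu‖² + ‖H^{1/2}P_⊥u‖². -/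
local notation "⟪" x ", " y "⟫" => @inner ℝ _ _ x y

/-!
Since `S ∘ S = H` is coercive, `S` is invertible, and `h[u] - h_P[u] = 2 ⟪S P u, S (u - P u)⟫`
pairs the finite-dimensional subspace `M = S (ran P)` with the closed subspace `K = S (ker P)`,
which meet only in `0`. The orthogonal projection onto `K` is strictly contractive on each unit
vector of `M`, so by compactness of the unit sphere of `M` its norm on `M` is some `η < 1`; this
bounds the cosine of the angle between `M` and `K`, and
`2 |⟪a, b⟫| ≤ 2 η ‖a‖ ‖b‖ ≤ η (‖a‖² + ‖b‖²)`.
-/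

open LinearMap (range ker)

section Angle

variable {𝕜 E : Type*} [RCLike 𝕜] [NormedAddCommGroup E] [InnerProductSpace 𝕜 E]

theorem Submodule.norm_starProjection_comp_subtypeL_lt_one {M K : Submodule 𝕜 E}
    [FiniteDimensional 𝕜 M] [K.HasOrthogonalProjection] (hMK : Disjoint M K) :
    ‖K.starProjection ∘L M.subtypeL‖ < 1 := by
  set f := K.starProjection ∘L M.subtypeL
  cases subsingleton_or_nontrivial M
  · simp [Subsingleton.elim f 0]
  obtain ⟨z, hz, hzmax⟩ := (isCompact_sphere (0 : M) 1).exists_isMaxOn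
    (Set.nonempty_coe_sort.1 (NormedSpace.sphere_nonempty_rclike 𝕜 zero_le_one))
    (continuous_norm.comp f.continuous).continuousOn
  have hz1 : ‖z‖ = 1 := by simpa using hz
  have hzK : (z : E) ∉ K := fun h ↦ by
    simp [show z = 0 by simpa using hMK.le_bot ⟨z.2, h⟩] at hz1
  calc ‖f‖ ≤ ‖f z‖ := f.opNorm_le_of_unit_norm (norm_nonneg _) fun x hx ↦
        hzmax (show x ∈ Metric.sphere 0 1 by simpa using hx)
    _ < ‖(z : E)‖ := (K.norm_starProjection_apply_le z).lt_of_ne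
        (mt (K.mem_iff_norm_starProjection _).2 hzK)
    _ = 1 := hz1

theorem Submodule.exists_norm_inner_le_of_disjoint {M K : Submodule 𝕜 E}
    [FiniteDimensional 𝕜 M] [K.HasOrthogonalProjection] (hMK : Disjoint M K) :
    ∃ η, 0 ≤ η ∧ η < 1 ∧ ∀ a ∈ M, ∀ b ∈ K, ‖inner 𝕜 a b‖ ≤ η * ‖a‖ * ‖b‖ := by
  refine ⟨_, norm_nonneg _, norm_starProjection_comp_subtypeL_lt_one hMK, fun a ha b hb ↦ ?_⟩
  calc ‖inner 𝕜 a b‖ = ‖inner 𝕜 (K.starProjection a) b‖ := by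
        rw [K.inner_starProjection_left_eq_right, K.starProjection_eq_self_iff.2 hb]
    _ ≤ ‖K.starProjection a‖ * ‖b‖ := norm_inner_le_norm _ _
    _ ≤ ‖K.starProjection ∘L M.subtypeL‖ * ‖a‖ * ‖b‖ := by
        gcongr
        exact (K.starProjection ∘L M.subtypeL).le_opNorm ⟨a, ha⟩

end Angle

theorem abs_norm_add_sq_sub_le {F : Type*} [NormedAddCommGroup F] [InnerProductSpace ℝ F]
    {x y : F} {η : ℝ} (hη : 0 ≤ η) (h : |⟪x, y⟫| ≤ η * ‖x‖ * ‖y‖) :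
    |‖x + y‖ ^ 2 - (‖x‖ ^ 2 + ‖y‖ ^ 2)| ≤ η * (‖x‖ ^ 2 + ‖y‖ ^ 2) := by
  rw [norm_add_sq_real, show ‖x‖ ^ 2 + 2 * ⟪x, y⟫ + ‖y‖ ^ 2 - (‖x‖ ^ 2 + ‖y‖ ^ 2)
    = 2 * ⟪x, y⟫ by ring, abs_mul, abs_two]
  nlinarith [mul_nonneg hη (sq_nonneg (‖x‖ - ‖y‖))]

section Operator

variable {E : Type*} [NormedAddCommGroup E] [InnerProductSpace ℝ E] [CompleteSpace E]

theorem ContinuousLinearMap.bijective_of_coercive {T : E →L[ℝ] E}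
    (hT : ∃ c > (0:ℝ), ∀ u, c * ‖u‖ ^ 2 ≤ ⟪u, T u⟫) : Function.Bijective T := by
  obtain ⟨c, hc, hcT⟩ := hT
  have hB : IsCoercive (innerSL ℝ ∘L T) :=
    ⟨c, hc, fun u ↦ by
      rw [ContinuousLinearMap.comp_apply, innerSL_apply_apply, real_inner_comm, mul_assoc, ← sq]
      exact hcT u⟩
  have hT : ⇑T = hB.continuousLinearEquivOfBilin := funext fun v ↦
    hB.unique_continuousLinearEquivOfBilin fun w ↦ rfl
  exact hT ▸ ContinuousLinearEquiv.bijective _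

theorem exists_abs_inner_le_of_isIdempotentElem {S P : E →L[ℝ] E} (hS : Function.Bijective S)
    (hP : IsIdempotentElem P) [FiniteDimensional ℝ (range (P : E →ₗ[ℝ] E))] :
    ∃ η, 0 ≤ η ∧ η < 1 ∧
      ∀ u, |⟪S (P u), S (u - P u)⟫| ≤ η * ‖S (P u)‖ * ‖S (u - P u)‖ := by
  set e := ContinuousLinearEquiv.ofBijective S (LinearMap.ker_eq_bot.2 hS.1)
    (LinearMap.range_eq_top.2 hS.2)
  set M := (range (P : E →ₗ[ℝ] E)).map (S : E →ₗ[ℝ] E)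
  set K := (ker (P : E →ₗ[ℝ] E)).map (S : E →ₗ[ℝ] E)
  have hK : IsClosed (K : Set E) := by
    rw [Submodule.map_coe]
    exact e.isClosed_image.2 P.isClosed_ker
  have := hK.completeSpace_coe
  have hMK : Disjoint M K :=
    Submodule.disjoint_map hS.1 (LinearMap.IsIdempotentElem.isCompl
      (ContinuousLinearMap.IsIdempotentElem.toLinearMap hP)).disjoint
  obtain ⟨η, hη0, hη1, hη⟩ := Submodule.exists_norm_inner_le_of_disjoint hMK
  refine ⟨η, hη0, hη1, fun u ↦ hη _ ⟨P u, ⟨u, rfl⟩, rfl⟩ _ ⟨u - P u, ?_, rfl⟩⟩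
  simp [show P (P u) = P u from congr($hP u)]

end Operator

theorem eta_max_lt_one_general
    {H : Type*} [NormedAddCommGroup H] [InnerProductSpace ℝ H] [CompleteSpace H]
    (Hop S P : H →L[ℝ] H)
    (hHpos : ∃ c > (0:ℝ), ∀ u : H, c * ‖u‖ ^ 2 ≤ ⟪u, Hop u⟫)
    (hSsq : S ∘L S = Hop)
    (hPidem : P ∘L P = P)
    (hfin : FiniteDimensional ℝ (LinearMap.range (P : H →ₗ[ℝ] H))) :
    ∃ η : ℝ, η < 1 ∧
      ∀ u : H, u ≠ 0 →
        |‖S u‖ ^ 2 - (‖S (P u)‖ ^ 2 + ‖S (u - P u)‖ ^ 2)|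
          ≤ η * (‖S (P u)‖ ^ 2 + ‖S (u - P u)‖ ^ 2) := by
  have hSS := ContinuousLinearMap.bijective_of_coercive hHpos
  rw [← hSsq, ContinuousLinearMap.coe_comp] at hSS
  have hS : Function.Bijective S := ⟨hSS.1.of_comp, hSS.2.of_comp⟩
  obtain ⟨η, hη0, hη1, hη⟩ := exists_abs_inner_le_of_isIdempotentElem hS hPidem
  refine ⟨η, hη1, fun u _ ↦ ?_⟩
  simpa [← map_add] using abs_norm_add_sq_sub_le hη0 (hη u)

/-- Fact (3.3): for a bounded positive definite self-adjoint operator `H` with square root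
`S = H^{1/2}` and an orthogonal projection `P` with finite-dimensional range,
`η_max(P) = sup_{u≠0} |h[u] − h_P[u]| / h_P[u] < 1`, where `h[u] = ‖S u‖²` and
`h_P[u] = ‖S(Pu)‖² + ‖S(u − Pu)‖²`. -/
theorem eta_max_lt_one
    {H : Type*} [NormedAddCommGroup H] [InnerProductSpace ℝ H] [CompleteSpace H]
    (Hop S P : H →L[ℝ] H)
    (hHsa : IsSelfAdjoint Hop)
    (hHpos : ∃ c > (0:ℝ), ∀ u : H, c * ‖u‖ ^ 2 ≤ ⟪u, Hop u⟫)
    (hS : IsSelfAdjoint S) (hSpos : ∀ u : H, 0 ≤ ⟪u, S u⟫) (hSsq : S ∘L S = Hop)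
    (hP : IsSelfAdjoint P) (hPidem : P ∘L P = P)
    (hfin : FiniteDimensional ℝ (LinearMap.range (P : H →ₗ[ℝ] H))) :
    ∃ η : ℝ, η < 1 ∧
      ∀ u : H, u ≠ 0 →
        |‖S u‖ ^ 2 - (‖S (P u)‖ ^ 2 + ‖S (u - P u)‖ ^ 2)|
          ≤ η * (‖S (P u)‖ ^ 2 + ‖S (u - P u)‖ ^ 2) :=
  eta_max_lt_one_general Hop S P hHpos hSsq hPidem hfin
end
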